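/- The cardinality of the abacus blob monoid 𝔅l_{d,n} equals d^n · Σ_{k=1}^{n} χ_k^{(n)} (1+d)^k. -/

import Mathlib

open Finset

/-- `l` encodes a (non-degenerate) indexing matrix on `n` points: the columns,
listed left to right, as pairs `(top entry, bottom entry)`.  Entries lie in
`[0, n-1]`, the first row is strictly increasing, the second row is weakly
increasing, repeated second-row entries are `0`, and each top entry is at
least the corresponding bottom entry. -/
def IsIndexingMatrix (n : ℕ) (l : List (ℕ × ℕ)) : Prop :=
  1 ≤ l.length ∧ l.length ≤ n ∧
  (∀ p ∈ l, p.1 < n ∧ p.2 ≤ p.1) ∧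
  l.Pairwise (fun p q => p.1 < q.1 ∧ p.2 ≤ q.2 ∧ (p.2 = q.2 → p.2 = 0))

/-- A positive indexing matrix: all entries are positive. -/
def IsPositiveIndexingMatrix (n : ℕ) (l : List (ℕ × ℕ)) : Prop :=
  IsIndexingMatrix n l ∧ ∀ p ∈ l, 0 < p.1 ∧ 0 < p.2

/-- `θ_k^{(n)}`: the number of positive indexing matrices whose `(1,1)` entry
equals `k`. -/
noncomputable def theta (n k : ℕ) : ℕ :=
  Nat.card {l : List (ℕ × ℕ) //
    IsPositiveIndexingMatrix n l ∧ l.head?.map Prod.fst = some k}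

/-- The blob-rank of an indexing matrix: the number of its columns containing
a `0`. -/
def blobRank (l : List (ℕ × ℕ)) : ℕ := l.countP (fun p => p.1 == 0 || p.2 == 0)

/-- `Ω_r^{(n)}`: the number of indexing matrices on `n` points of blob-rank `r`,
the degenerate indexing matrix being counted in `Ω_0^{(n)}`. -/
noncomputable def Omega (n r : ℕ) : ℕ :=
  Nat.card {l : List (ℕ × ℕ) // IsIndexingMatrix n l ∧ blobRank l = r} +
    (if r = 0 then 1 else 0)

/-- `χ_k^{(n)} = Σ_{i₁+⋯+i_k = n-k} C_{i₁} ⋯ C_{i_k}` (Catalan numbers). -/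
def chi (n k : ℕ) : ℕ :=
  ∑ t ∈ Finset.Nat.antidiagonalTuple k (n - k), ∏ j, catalan (t j)

/-- A Temperley–Lieb diagram on `n` points: a non-crossing perfect matching of
`2n` boundary points numbered clockwise, given by a fixed-point free
involution. -/
structure TLDiagram (n : ℕ) where
  f : Fin (2 * n) → Fin (2 * n)
  involutive : ∀ x, f (f x) = x
  noFixedPoint : ∀ x, f x ≠ x
  noncrossing : ∀ a b : Fin (2 * n), a < b → b < f a → f a < f b → False

/-- `a` is the left (smaller) endpoint of an arc of `D`. -/
def TLDiagram.IsArc {n : ℕ} (D : TLDiagram n) (a : Fin (2 * n)) : Prop :=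
  a < D.f a

/-- The arc with left endpoint `a` is exposed to the left side of the diagram,
i.e. it is not nested inside any other arc. -/
def TLDiagram.IsExposed {n : ℕ} (D : TLDiagram n) (a : Fin (2 * n)) : Prop :=
  a < D.f a ∧ ∀ c, ¬ (c < a ∧ D.f a < D.f c)

/-- The number of arcs of `D` exposed to the left side. -/
noncomputable def exposedCount {n : ℕ} (D : TLDiagram n) : ℕ :=
  Nat.card {a : Fin (2 * n) // D.IsExposed a}

/-- A `d`-abacus blob diagram on `n` points: a TL-diagram together with blobs
on some arcs exposed to the left, one bead count in `ℤ/dℤ` on every arc, and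
an extra bead count on every blobbed arc (its second component). -/
structure AbacusBlobDiagram (d n : ℕ) where
  base : TLDiagram n
  blob : Fin (2 * n) → Bool
  blob_exposed : ∀ a, blob a = true → base.IsExposed a
  beads₁ : Fin (2 * n) → ZMod d
  beads₂ : Fin (2 * n) → ZMod d
  beads₁_arc : ∀ a, ¬ base.IsArc a → beads₁ a = 0
  beads₂_blob : ∀ a, blob a = false → beads₂ a = 0

/-- A `d`-abacus hook diagram on `n` points: a blobbed TL-diagram in which all
blobbed arcs are merged into the single hook component through `0, 0'`, with a
bead count in `ℤ/dℤ` on every unblobbed arc and one on the hook component. -/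
structure AbacusHookDiagram (d n : ℕ) where
  base : TLDiagram n
  blob : Fin (2 * n) → Bool
  blob_exposed : ∀ a, blob a = true → base.IsExposed a
  beads : Fin (2 * n) → ZMod d
  beads_arc : ∀ a, ¬ base.IsArc a ∨ blob a = true → beads a = 0
  hookBeads : ZMod d

/-!
An abacus blob diagram is a Temperley–Lieb diagram together with a bead count on each of its
`n` arcs and, on each arc exposed to the left, either no blob or a blob carrying a second bead
count; over a diagram with `k` exposed arcs there are therefore `d^n (1+d)^k` of them. It remains
to count Temperley–Lieb diagrams by their exposed arcs. Cutting a diagram on `n + 1` points at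
the arc through the point `0` leaves a diagram on `i` points inside that arc and a diagram on
`n - i` points to its right, which carries all the other exposed arcs. This first-return
decomposition gives `C_{n+1} = Σ C_i C_{n-i}` and `χ_{k+1}^{(n+1)} = Σ_i C_i χ_k^{(n-i)}`, the
recursion satisfied by the Catalan convolutions `χ`.
-/

theorem Finset.Nat.sum_antidiagonalTuple_succ {M : Type*} [AddCommMonoid M] (k m : ℕ)
    (f : (Fin (k + 1) → ℕ) → M) :
    ∑ t ∈ Finset.Nat.antidiagonalTuple (k + 1) m, f t =
      ∑ p ∈ antidiagonal m,
        ∑ t ∈ Finset.Nat.antidiagonalTuple k p.2, f (Fin.cons p.1 t) := by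
  -- `antidiagonalTuple (k + 1)` is defined as a `flatMap` over the antidiagonal
  show (List.map f (List.Nat.antidiagonalTuple (k + 1) m)).sum =
    ((List.Nat.antidiagonal m).map fun p =>
      ((List.Nat.antidiagonalTuple k p.2).map fun t => f (Fin.cons p.1 t)).sum).sum
  simp only [List.Nat.antidiagonalTuple, List.flatMap_def, List.map_flatten, List.sum_flatten,
    List.map_map, Function.comp_def]

theorem Finset.Nat.sum_antidiagonal_add_right {M : Type*} [AddCommMonoid M] (f : ℕ → ℕ → M)
    (m k : ℕ) (hf : ∀ a b, b < k → f a b = 0) :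
    ∑ p ∈ antidiagonal (m + k), f p.1 p.2 = ∑ p ∈ antidiagonal m, f p.1 (p.2 + k) := by
  rw [Finset.Nat.sum_antidiagonal_eq_sum_range_succ f, Finset.Nat.sum_antidiagonal_eq_sum_range_succ
    (fun a b => f a (b + k)), show (m + k).succ = m + 1 + k by omega, sum_range_add,
    sum_eq_zero (s := range k) fun x hx => hf _ _ (by rw [mem_range] at hx; omega), add_zero]
  exact sum_congr rfl fun a ha => by rw [mem_range] at ha; congr 1; omega

theorem Finset.card_eq_two_mul_card_filter_lt {α : Type*} [LinearOrder α] (s : Finset α)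
    (g : α → α) (hmaps : ∀ x ∈ s, g x ∈ s) (hinv : ∀ x ∈ s, g (g x) = x)
    (hne : ∀ x ∈ s, g x ≠ x) :
    s.card = 2 * (s.filter fun x => x < g x).card := by
  have hswap : (s.filter fun x => g x < x).card = (s.filter fun x => x < g x).card := by
    refine Finset.card_nbij' g g ?_ ?_ ?_ ?_ <;> intro x hx <;>
      simp only [Finset.coe_filter, Set.mem_ofPred_eq] at hx ⊢
    · exact ⟨hmaps x hx.1, by rw [hinv x hx.1]; exact hx.2⟩
    · exact ⟨hmaps x hx.1, by rw [hinv x hx.1]; exact hx.2⟩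
    · exact hinv x hx.1
    · exact hinv x hx.1
  have hnot : (s.filter fun x => ¬ x < g x) = s.filter fun x => g x < x :=
    Finset.filter_congr fun x hx => by rw [not_lt]; exact (hne x hx).le_iff_lt
  have hsplit := Finset.card_filter_add_card_filter_not (s := s) (fun x => x < g x)
  rw [hnot, hswap] at hsplit
  omega

theorem Nat.card_fin_subtype (N : ℕ) (p : ℕ → Prop) [DecidablePred p] :
    Nat.card {a : Fin N // p a} = #((range N).filter p) := by
  rw [Nat.card_eq_fintype_card, Fintype.card_subtype, ← Nat.Iio_eq_range,
    ← Fin.map_valEmbedding_univ, Finset.filter_map, card_map]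
  rfl

namespace TLDiagram

section partner

variable {n : ℕ}

@[ext]
theorem ext {D E : TLDiagram n} (h : D.f = E.f) : D = E := by
  cases D; cases E; simpa using h

noncomputable instance : Fintype (TLDiagram n) :=
  Fintype.ofInjective TLDiagram.f fun _ _ => ext

/-- Extended by the identity outside `[0, 2n)`, so that it is an involution of all of `ℕ`. -/
def partner (D : TLDiagram n) (x : ℕ) : ℕ :=
  if h : x < 2 * n then D.f ⟨x, h⟩ else x

variable (D : TLDiagram n)

theorem partner_of_lt {x : ℕ} (hx : x < 2 * n) : D.partner x = D.f ⟨x, hx⟩ :=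
  dif_pos hx

@[simp]
theorem partner_val (x : Fin (2 * n)) : D.partner x = D.f x :=
  D.partner_of_lt x.2

theorem partner_of_ge {x : ℕ} (hx : 2 * n ≤ x) : D.partner x = x :=
  dif_neg (not_lt.mpr hx)

theorem partner_lt {x : ℕ} (hx : x < 2 * n) : D.partner x < 2 * n := by
  simp [partner, hx]

theorem partner_partner (x : ℕ) : D.partner (D.partner x) = x := by
  by_cases hx : x < 2 * n
  · rw [D.partner_of_lt hx, partner_val, D.involutive]
  · simp [partner, hx]

theorem partner_ne {x : ℕ} (hx : x < 2 * n) : D.partner x ≠ x := by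
  rw [D.partner_of_lt hx]
  exact fun h => D.noFixedPoint _ (Fin.ext h)

theorem partner_injective : Function.Injective D.partner :=
  Function.LeftInverse.injective D.partner_partner

theorem not_partner_crossing {a b : ℕ} (hab : a < b) (hb : b < D.partner a)
    (hc : D.partner a < D.partner b) : False := by
  by_cases ha : a < 2 * n
  · have hb' : b < 2 * n := hb.trans (D.partner_lt ha)
    rw [D.partner_of_lt ha] at hb hc
    rw [D.partner_of_lt hb'] at hc
    exact D.noncrossing ⟨a, ha⟩ ⟨b, hb'⟩ hab hb hc
  · simp only [partner, ha, dite_false] at hb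
    omega

theorem ext_partner {D E : TLDiagram n} (h : ∀ x < 2 * n, D.partner x = E.partner x) : D = E :=
  ext <| funext fun x => Fin.ext <| by rw [← partner_val, ← partner_val, h x x.2]

def ofPartner (g : ℕ → ℕ) (hlt : ∀ x < 2 * n, g x < 2 * n)
    (hinv : ∀ x < 2 * n, g (g x) = x) (hne : ∀ x < 2 * n, g x ≠ x)
    (hcross : ∀ a b, b < 2 * n → a < b → b < g a → g a < g b → False) : TLDiagram n where
  f x := ⟨g x, hlt x x.2⟩
  involutive x := Fin.ext (hinv x x.2)
  noFixedPoint x h := hne x x.2 (congrArg Fin.val h)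
  noncrossing a b := hcross a b b.2

theorem partner_ofPartner {g : ℕ → ℕ} (hlt : ∀ x < 2 * n, g x < 2 * n)
    (hinv : ∀ x < 2 * n, g (g x) = x) (hne : ∀ x < 2 * n, g x ≠ x)
    (hcross : ∀ a b, b < 2 * n → a < b → b < g a → g a < g b → False) {x : ℕ}
    (hx : x < 2 * n) : (ofPartner g hlt hinv hne hcross).partner x = g x :=
  dif_pos hx

theorem card_filter_lt_partner : #((range (2 * n)).filter fun x => x < D.partner x) = n := by
  have h := Finset.card_eq_two_mul_card_filter_lt (range (2 * n)) D.partner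
    (fun x hx => by simpa using D.partner_lt (by simpa using hx))
    (fun x _ => D.partner_partner x) (fun x hx => D.partner_ne (by simpa using hx))
  rw [card_range] at h
  omega

theorem card_isArc : Nat.card {a // D.IsArc a} = n := by
  rw [Nat.card_congr (Equiv.subtypeEquivRight fun a => by rw [IsArc, Fin.lt_def, ← partner_val]),
    Nat.card_fin_subtype (2 * n) fun x => x < D.partner x, card_filter_lt_partner]

theorem forall_partner_lt_iff {a : ℕ} (harc : a < D.partner a) :
    (∀ c < a, D.partner c ≤ D.partner a) ↔ ∀ c < a, D.partner c < a := by
  refine ⟨fun h c hca => ?_, fun h c hca => (h c hca).le.trans (by omega)⟩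
  by_contra hle
  have hca' : a < D.partner c := by
    refine lt_of_le_of_ne (not_lt.mp hle) fun he => ?_
    have := D.partner_partner c
    rw [← he] at this
    omega
  have hne : D.partner c ≠ D.partner a := fun he => hca.ne (D.partner_injective he)
  exact D.not_partner_crossing hca hca' (lt_of_le_of_ne (h c hca) hne)

/-- Left endpoints `a` of arcs such that `[0, a)` is closed under the matching: by
non-crossing, these are exactly the arcs exposed to the left. -/
def exposedPoints : Finset ℕ :=
  (range (2 * n)).filter fun a => a < D.partner a ∧ ∀ c < a, D.partner c < a

theorem mem_exposedPoints {a : ℕ} :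
    a ∈ D.exposedPoints ↔ a < 2 * n ∧ a < D.partner a ∧ ∀ c < a, D.partner c < a := by
  simp [exposedPoints]

theorem exposedCount_eq_card : exposedCount D = #D.exposedPoints := by
  rw [exposedCount, exposedPoints, ← Nat.card_fin_subtype]
  refine Nat.card_congr (Equiv.subtypeEquivRight fun a => ?_)
  simp only [IsExposed, Fin.lt_def, ← partner_val, not_and, not_lt]
  refine and_congr_right fun harc => (Iff.trans ?_ (D.forall_partner_lt_iff harc))
  exact ⟨fun h c hca => h ⟨c, hca.trans a.2⟩ hca, fun h c hca => h c hca⟩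

theorem exposedCount_le : exposedCount D ≤ n := by
  rw [exposedCount_eq_card]
  calc #D.exposedPoints ≤ #((range (2 * n)).filter fun x => x < D.partner x) :=
        card_le_card (monotone_filter_right _ fun _ _ h => h.1)
    _ = n := D.card_filter_lt_partner

theorem one_le_exposedCount (hn : 1 ≤ n) : 1 ≤ exposedCount D := by
  rw [exposedCount_eq_card, Nat.one_le_iff_ne_zero, Ne, card_eq_zero,
    ← Ne, ← nonempty_iff_ne_empty]
  refine ⟨0, mem_filter.mpr ⟨mem_range.mpr (by omega), ?_, by simp⟩⟩
  exact Nat.pos_of_ne_zero (D.partner_ne (by omega))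

theorem partner_mem_Ioo {a x : ℕ} (hax : a < x) (hx : x < D.partner a) :
    a < D.partner x ∧ D.partner x < D.partner a := by
  have hx' := D.partner_partner x
  refine ⟨lt_of_not_ge fun hle => ?_, lt_of_not_ge fun hle => ?_⟩
  · rcases hle.lt_or_eq with hlt | heq
    · exact D.not_partner_crossing hlt (by omega) (by omega)
    · rw [heq] at hx'
      omega
  · rcases hle.lt_or_eq with hlt | heq
    · exact D.not_partner_crossing hax hx hlt
    · have := D.partner_injective heq
      omega

theorem partner_zero_lt_partner {x : ℕ} (hx : D.partner 0 < x) : D.partner 0 < D.partner x := by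
  have hx' := D.partner_partner x
  by_contra! hle
  rcases Nat.eq_zero_or_pos (D.partner x) with h0 | h0
  · rw [h0] at hx'
    omega
  rcases hle.lt_or_eq with hlt | heq
  · have := (D.partner_mem_Ioo h0 hlt).2
    omega
  · have := D.partner_injective heq
    omega

theorem exists_partner_zero_eq (hn : 0 < n) : ∃ i, D.partner 0 = 2 * i + 1 := by
  have h := Finset.card_eq_two_mul_card_filter_lt (Ioo 0 (D.partner 0)) D.partner
    (fun x hx => by
      rw [mem_Ioo] at hx ⊢
      exact D.partner_mem_Ioo hx.1 hx.2)
    (fun x _ => D.partner_partner x)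
    (fun x hx => D.partner_ne ((mem_Ioo.mp hx).2.trans (D.partner_lt (by omega))))
  have := D.partner_ne (x := 0) (by omega)
  rw [Nat.card_Ioo] at h
  exact ⟨#((Ioo 0 (D.partner 0)).filter fun x => x < D.partner x), by omega⟩

def restrict (o k : ℕ) (hk : o + 2 * k ≤ 2 * n)
    (hmaps : ∀ x, o ≤ x → x < o + 2 * k → o ≤ D.partner x ∧ D.partner x < o + 2 * k) :
    TLDiagram k :=
  ofPartner (fun y => D.partner (o + y) - o)
    (fun y hy => by have := hmaps (o + y) (by omega) (by omega); omega)
    (fun y hy => by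
      have := hmaps (o + y) (by omega) (by omega)
      rw [Nat.add_sub_cancel' this.1, partner_partner]
      omega)
    (fun y hy => by
      have := hmaps (o + y) (by omega) (by omega)
      have := D.partner_ne (x := o + y) (by omega)
      omega)
    (fun a b hb hab h1 h2 => by
      have := hmaps (o + a) (by omega) (by omega)
      have := hmaps (o + b) (by omega) (by omega)
      exact D.not_partner_crossing (by omega : o + a < o + b) (by omega) (by omega))

theorem partner_restrict {o k : ℕ} (hk) (hmaps) {y : ℕ} (hy : y < 2 * k) :
    (D.restrict o k hk hmaps).partner y = D.partner (o + y) - o :=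
  partner_ofPartner _ _ _ _ hy

end partner

/-- The matching of an arc `(0, 2i+1)` enclosing the matching `g` of `[0, 2i)`, followed by
the matching `h`. -/
def glueFun (i : ℕ) (g h : ℕ → ℕ) (x : ℕ) : ℕ :=
  if x = 0 then 2 * i + 1
  else if x ≤ 2 * i then g (x - 1) + 1
  else if x = 2 * i + 1 then 0
  else 2 * i + 2 + h (x - (2 * i + 2))

section glueFun

variable (i : ℕ) (g h : ℕ → ℕ)

@[simp]
theorem glueFun_zero : glueFun i g h 0 = 2 * i + 1 := rfl

theorem glueFun_succ {y : ℕ} (hy : y < 2 * i) : glueFun i g h (y + 1) = g y + 1 := by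
  simp [glueFun, show y + 1 ≤ 2 * i by omega]

@[simp]
theorem glueFun_mid : glueFun i g h (2 * i + 1) = 0 := by
  simp [glueFun]

@[simp]
theorem glueFun_add (y : ℕ) : glueFun i g h (2 * i + 2 + y) = 2 * i + 2 + h y := by
  simp [glueFun, show ¬ 2 * i + 2 + y ≤ 2 * i by omega,
    show 2 * i + 2 + y ≠ 2 * i + 1 by omega]

end glueFun

theorem eq_zero_or_inner_or_mid_or_outer (i x : ℕ) :
    x = 0 ∨ (∃ y < 2 * i, x = y + 1) ∨ x = 2 * i + 1 ∨ ∃ y, x = 2 * i + 2 + y := by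
  rcases Nat.lt_or_ge x (2 * i + 2) with hx | hx
  · rcases x with _ | y
    · exact .inl rfl
    · rcases Nat.lt_or_ge y (2 * i) with hy | hy
      · exact .inr <| .inl ⟨y, hy, rfl⟩
      · exact .inr <| .inr <| .inl (by omega)
  · exact .inr <| .inr <| .inr ⟨x - (2 * i + 2), by omega⟩

variable {n i j : ℕ}

section

variable (A : TLDiagram i) (B : TLDiagram j)

theorem glueFun_lt {x : ℕ} (hx : x < 2 * (i + j + 1)) :
    glueFun i A.partner B.partner x < 2 * (i + j + 1) := by
  rcases eq_zero_or_inner_or_mid_or_outer i x with rfl | ⟨y, hy, rfl⟩ | rfl | ⟨y, rfl⟩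
  · simp; omega
  · rw [glueFun_succ _ _ _ hy]; have := A.partner_lt hy; omega
  · simp
  · rw [glueFun_add]; have := B.partner_lt (x := y) (by omega); omega

theorem glueFun_glueFun (x : ℕ) :
    glueFun i A.partner B.partner (glueFun i A.partner B.partner x) = x := by
  rcases eq_zero_or_inner_or_mid_or_outer i x with rfl | ⟨y, hy, rfl⟩ | rfl | ⟨y, rfl⟩
  · simp
  · rw [glueFun_succ _ _ _ hy, glueFun_succ _ _ _ (A.partner_lt hy), partner_partner]
  · simp
  · simp [partner_partner]

theorem glueFun_ne {x : ℕ} (hx : x < 2 * (i + j + 1)) :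
    glueFun i A.partner B.partner x ≠ x := by
  rcases eq_zero_or_inner_or_mid_or_outer i x with rfl | ⟨y, hy, rfl⟩ | rfl | ⟨y, rfl⟩
  · simp
  · rw [glueFun_succ _ _ _ hy]; have := A.partner_ne hy; omega
  · simp
  · rw [glueFun_add]; have := B.partner_ne (x := y) (by omega); omega

theorem not_glueFun_crossing {a b : ℕ} (hab : a < b) (hb : b < glueFun i A.partner B.partner a)
    (hc : glueFun i A.partner B.partner a < glueFun i A.partner B.partner b) : False := by
  rcases eq_zero_or_inner_or_mid_or_outer i a with rfl | ⟨y, hy, rfl⟩ | rfl | ⟨y, rfl⟩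
  · rw [glueFun_zero] at hb hc
    obtain ⟨z, hz, rfl⟩ : ∃ z < 2 * i, b = z + 1 := ⟨b - 1, by omega, by omega⟩
    rw [glueFun_succ _ _ _ hz] at hc
    have := A.partner_lt hz
    omega
  · rw [glueFun_succ _ _ _ hy] at hb hc
    have := A.partner_lt hy
    obtain ⟨z, hz, rfl⟩ : ∃ z < 2 * i, b = z + 1 := ⟨b - 1, by omega, by omega⟩
    rw [glueFun_succ _ _ _ hz] at hc
    exact A.not_partner_crossing (by omega : y < z) (by omega) (by omega)
  · simp at hb
  · rw [glueFun_add] at hb hc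
    obtain ⟨z, rfl⟩ : ∃ z, b = 2 * i + 2 + z := ⟨b - (2 * i + 2), by omega⟩
    rw [glueFun_add] at hc
    exact B.not_partner_crossing (by omega : y < z) (by omega) (by omega)

end

def glue (A : TLDiagram i) (B : TLDiagram j) (hij : i + j = n) : TLDiagram (n + 1) :=
  ofPartner (glueFun i A.partner B.partner) (fun _ hx => hij ▸ glueFun_lt A B (hij ▸ hx))
    (fun x _ => glueFun_glueFun A B x) (fun _ hx => glueFun_ne A B (hij ▸ hx))
    (fun _ _ _ => not_glueFun_crossing A B)

theorem partner_glue (A : TLDiagram i) (B : TLDiagram j) (hij : i + j = n) (x : ℕ) :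
    (glue A B hij).partner x = glueFun i A.partner B.partner x := by
  by_cases hx : x < 2 * (n + 1)
  · exact partner_ofPartner _ _ _ _ hx
  · obtain ⟨y, rfl⟩ : ∃ y, x = 2 * i + 2 + y := ⟨x - (2 * i + 2), by omega⟩
    rw [partner_of_ge _ (by omega), glueFun_add, B.partner_of_ge (by omega)]

theorem glue_inj {A A' : TLDiagram i} {B B' : TLDiagram j} {hij : i + j = n}
    {hij' : i + j = n} : glue A B hij = glue A' B' hij' ↔ A = A' ∧ B = B' := by
  refine ⟨fun h => ⟨ext_partner fun y hy => ?_, ext_partner fun y _ => ?_⟩,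
    fun ⟨hA, hB⟩ => hA ▸ hB ▸ rfl⟩
  · have := congrArg (partner · (y + 1)) h
    simpa [partner_glue, glueFun_succ _ _ _ hy] using this
  · have := congrArg (partner · (2 * i + 2 + y)) h
    simpa [partner_glue] using this

theorem partner_glue_zero (A : TLDiagram i) (B : TLDiagram j) (hij : i + j = n) :
    (glue A B hij).partner 0 = 2 * i + 1 := by
  rw [partner_glue, glueFun_zero]

theorem exposedPoints_glue (A : TLDiagram i) (B : TLDiagram j) (hij : i + j = n) :
    (glue A B hij).exposedPoints =
      insert 0 (B.exposedPoints.map (addLeftEmbedding (2 * i + 2))) := by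
  ext x
  simp only [mem_exposedPoints, partner_glue, mem_insert, mem_map, addLeftEmbedding_apply]
  rcases eq_zero_or_inner_or_mid_or_outer i x with rfl | ⟨y, hy, rfl⟩ | rfl | ⟨y, rfl⟩
  · simp
  · rw [glueFun_succ _ _ _ hy]
    refine iff_of_false (fun ⟨_, _, h⟩ => ?_) (by omega)
    have := h 0 (by omega)
    simp at this
    omega
  · simp
    omega
  · simp only [glueFun_add, add_right_inj, exists_eq_right]
    rw [or_iff_right (by omega)]
    constructor
    · rintro ⟨h1, h2, h3⟩
      refine ⟨by omega, by omega, fun c hc => ?_⟩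
      have := h3 (2 * i + 2 + c) (by omega)
      rw [glueFun_add] at this
      omega
    · rintro ⟨h1, h2, h3⟩
      refine ⟨by omega, by omega, fun c hc => ?_⟩
      rcases eq_zero_or_inner_or_mid_or_outer i c with rfl | ⟨z, hz, rfl⟩ | rfl | ⟨z, rfl⟩
      · rw [glueFun_zero]
        omega
      · rw [glueFun_succ _ _ _ hz]
        have := A.partner_lt hz
        omega
      · simp
      · rw [glueFun_add]
        have := h3 z (by omega)
        omega

theorem exposedCount_glue (A : TLDiagram i) (B : TLDiagram j) (hij : i + j = n) :
    exposedCount (glue A B hij) = exposedCount B + 1 := by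
  rw [exposedCount_eq_card, exposedPoints_glue, card_insert_of_notMem (by simp), card_map,
    exposedCount_eq_card]

theorem exists_glue_eq (D : TLDiagram (n + 1)) :
    ∃ (i j : ℕ) (A : TLDiagram i) (B : TLDiagram j) (hij : i + j = n), glue A B hij = D := by
  obtain ⟨i, hi⟩ := D.exists_partner_zero_eq (by omega)
  have hm' : D.partner (2 * i + 1) = 0 := hi ▸ D.partner_partner 0
  have hinner : ∀ x, 0 < x → x < 2 * i + 1 → 0 < D.partner x ∧ D.partner x < 2 * i + 1 :=
    fun x h1 h2 => hi ▸ D.partner_mem_Ioo h1 (hi ▸ h2)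
  have houter : ∀ x, 2 * i + 1 < x → 2 * i + 1 < D.partner x :=
    fun x hx => hi ▸ D.partner_zero_lt_partner (hi ▸ hx)
  have hmN : 2 * i + 1 < 2 * (n + 1) := hi ▸ D.partner_lt (by omega)
  refine ⟨i, n - i, D.restrict 1 i (by omega) fun x h1 h2 => ?_,
    D.restrict (2 * i + 2) (n - i) (by omega) fun x h1 h2 => ?_, by omega, ?_⟩
  · have := hinner x h1 (by omega)
    omega
  · have := houter x (by omega)
    have := D.partner_lt (x := x) (by omega)
    omega
  refine ext_partner fun x hx => ?_
  rw [partner_glue]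
  rcases eq_zero_or_inner_or_mid_or_outer i x with rfl | ⟨y, hy, rfl⟩ | rfl | ⟨y, rfl⟩
  · rw [glueFun_zero, hi]
  · rw [glueFun_succ _ _ _ hy, partner_restrict _ _ _ hy, add_comm 1 y]
    have := hinner (y + 1) (by omega) (by omega)
    omega
  · rw [glueFun_mid, hm']
  · rw [glueFun_add, partner_restrict _ _ _ (by omega)]
    have := houter (2 * i + 2 + y) (by omega)
    omega

noncomputable def glueEquiv (n : ℕ) :
    (Σ p : antidiagonal n, TLDiagram p.1.1 × TLDiagram p.1.2) ≃ TLDiagram (n + 1) :=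
  Equiv.ofBijective (fun x => glue x.2.1 x.2.2 (HasAntidiagonal.mem_antidiagonal.mp x.1.2)) <| by
    refine ⟨?_, fun D => ?_⟩
    · rintro ⟨⟨⟨i, j⟩, hij⟩, A, B⟩ ⟨⟨⟨i', j'⟩, hij'⟩, A', B'⟩ h
      rw [HasAntidiagonal.mem_antidiagonal] at hij hij'
      have hi := congrArg (partner · 0) h
      simp only [partner_glue_zero, add_left_inj, mul_right_inj' two_ne_zero] at hi
      obtain rfl := hi
      obtain rfl : j = j' := by omega
      obtain ⟨rfl, rfl⟩ := glue_inj.mp h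
      rfl
    · obtain ⟨i, j, A, B, hij, rfl⟩ := exists_glue_eq D
      exact ⟨⟨⟨(i, j), HasAntidiagonal.mem_antidiagonal.mpr hij⟩, A, B⟩, rfl⟩

theorem glueEquiv_apply (p : antidiagonal n) (A : TLDiagram p.1.1) (B : TLDiagram p.1.2) :
    glueEquiv n ⟨p, A, B⟩ = glue A B (HasAntidiagonal.mem_antidiagonal.mp p.2) :=
  rfl

theorem sum_exposedCount_succ {M : Type*} [AddCommMonoid M] (F : ℕ → M) :
    ∑ D : TLDiagram (n + 1), F (exposedCount D) =
      ∑ p ∈ antidiagonal n, Fintype.card (TLDiagram p.1) •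
        ∑ B : TLDiagram p.2, F (exposedCount B + 1) := by
  rw [← (glueEquiv n).sum_comp, Fintype.sum_sigma, ← sum_coe_sort (antidiagonal n)]
  refine sum_congr rfl fun p _ => ?_
  simp only [Fintype.sum_prod_type, glueEquiv_apply, exposedCount_glue, sum_const, card_univ]

theorem card_eq_catalan (n : ℕ) : Fintype.card (TLDiagram n) = catalan n := by
  induction n using Nat.strong_induction_on with
  | _ n ih =>
    rcases n with _ | n
    · rw [catalan_zero, Fintype.card_eq_one_iff]
      exact ⟨ofPartner id (by omega) (by omega) (by omega) (by omega),
        fun D => ext_partner (by omega)⟩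
    · have h := sum_exposedCount_succ (n := n) fun _ => 1
      simp only [sum_const, card_univ, smul_eq_mul, mul_one] at h
      rw [h, catalan_succ']
      refine sum_congr rfl fun p hp => ?_
      have := HasAntidiagonal.mem_antidiagonal.mp hp
      rw [ih _ (by omega), ih _ (by omega)]

theorem card_exposedCount_eq_succ (k : ℕ) :
    #{D : TLDiagram (n + 1) | exposedCount D = k + 1} =
      ∑ p ∈ antidiagonal n, catalan p.1 * #{B : TLDiagram p.2 | exposedCount B = k} := by
  simp only [card_filter]
  rw [sum_exposedCount_succ fun e => if e = k + 1 then 1 else 0]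
  simp [card_eq_catalan]

theorem card_exposedCount_eq_sum_antidiagonalTuple (m k : ℕ) :
    #{D : TLDiagram (m + k) | exposedCount D = k} =
      ∑ t ∈ Finset.Nat.antidiagonalTuple k m, ∏ j, catalan (t j) := by
  induction k generalizing m with
  | zero =>
    rcases m with _ | m
    · rw [filter_true_of_mem fun D _ => Nat.le_zero.mp D.exposedCount_le, card_univ,
        card_eq_catalan]
      simp
    · rw [filter_false_of_mem fun D _ =>
        Nat.one_le_iff_ne_zero.mp (D.one_le_exposedCount le_add_self)]
      simp
  | succ k ih =>
    change #{D : TLDiagram (m + k + 1) | exposedCount D = k + 1} = _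
    rw [card_exposedCount_eq_succ, Finset.Nat.sum_antidiagonalTuple_succ,
      Finset.Nat.sum_antidiagonal_add_right
        (fun a b => catalan a * #{B : TLDiagram b | exposedCount B = k}) m k fun a b hb => ?_]
    · refine sum_congr rfl fun p _ => ?_
      simp only [Fin.prod_univ_succ, Fin.cons_zero, Fin.cons_succ, ← mul_sum, ih]
    · rw [card_eq_zero.mpr (filter_false_of_mem fun B _ => (B.exposedCount_le.trans_lt hb).ne),
        mul_zero]

theorem card_exposedCount_eq_chi {k : ℕ} (hk : k ≤ n) :
    #{D : TLDiagram n | exposedCount D = k} = chi n k := by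
  obtain ⟨m, rfl⟩ : ∃ m, n = m + k := ⟨n - k, by omega⟩
  rw [card_exposedCount_eq_sum_antidiagonalTuple, chi, Nat.add_sub_cancel]

theorem sum_pow_exposedCount {R : Type*} [CommSemiring R] (hn : 1 ≤ n) (x : R) :
    ∑ D : TLDiagram n, x ^ exposedCount D = ∑ k ∈ Icc 1 n, (chi n k : R) * x ^ k := by
  rw [← sum_fiberwise_of_maps_to (g := exposedCount) (t := Icc 1 n)
    fun D _ => mem_Icc.mpr ⟨D.one_le_exposedCount hn, D.exposedCount_le⟩]
  refine sum_congr rfl fun k hk => ?_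
  rw [sum_congr rfl fun D hD => by rw [(mem_filter.mp hD).2], sum_const, nsmul_eq_mul,
    card_exposedCount_eq_chi (mem_Icc.mp hk).2]

end TLDiagram

namespace AbacusBlobDiagram

variable {d n : ℕ}

theorem ext {x y : AbacusBlobDiagram d n} (hbase : x.base = y.base) (hblob : x.blob = y.blob)
    (h₁ : x.beads₁ = y.beads₁) (h₂ : x.beads₂ = y.beads₂) : x = y := by
  cases x; cases y; subst hbase hblob h₁ h₂; rfl

theorem blob_eq_false (x : AbacusBlobDiagram d n) {a : Fin (2 * n)}
    (ha : ¬ x.base.IsExposed a) : x.blob a = false := by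
  by_contra hb
  exact ha (x.blob_exposed a (by simpa using hb))

open Classical in
/-- On an exposed arc, `none` means no blob and `some c` a blob with second bead count `c`. -/
noncomputable def equivSigma (d n : ℕ) : AbacusBlobDiagram d n ≃
    Σ D : TLDiagram n,
      ({a // D.IsArc a} → ZMod d) × ({a // D.IsExposed a} → Option (ZMod d)) where
  toFun x :=
    ⟨x.base, fun a => x.beads₁ a, fun a => if x.blob a then some (x.beads₂ a) else none⟩
  invFun y :=
    { base := y.1
      blob a := if h : y.1.IsExposed a then (y.2.2 ⟨a, h⟩).isSome else false
      blob_exposed a h := by by_contra hne; simp [hne] at h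
      beads₁ a := if h : y.1.IsArc a then y.2.1 ⟨a, h⟩ else 0
      beads₂ a := if h : y.1.IsExposed a then (y.2.2 ⟨a, h⟩).getD 0 else 0
      beads₁_arc a h := dif_neg h
      beads₂_blob a h := by
        by_cases he : y.1.IsExposed a
        · simp only [he, dite_true, Option.isSome_eq_false_iff, Option.isNone_iff_eq_none] at h ⊢
          simp [h]
        · exact dif_neg he }
  left_inv x := by
    refine ext rfl (funext fun a => ?_) (funext fun a => ?_) (funext fun a => ?_)
    · by_cases he : x.base.IsExposed a
      · cases h : x.blob a <;> simp [he, h]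
      · simp [he, x.blob_eq_false he]
    · by_cases ha : x.base.IsArc a
      · simp [ha]
      · simp [ha, x.beads₁_arc a ha]
    · by_cases he : x.base.IsExposed a
      · cases h : x.blob a <;> simp [he, h, x.beads₂_blob a]
      · simp [he, x.beads₂_blob a (x.blob_eq_false he)]
  right_inv y := by
    obtain ⟨D, β, φ⟩ := y
    refine Sigma.ext rfl (heq_of_eq (Prod.ext (funext fun a => ?_) (funext fun a => ?_)))
    · exact dif_pos a.2
    · have ha : D.IsExposed a := a.2
      cases h : φ a <;> simp [ha, h]

theorem card_eq_sum [NeZero d] :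
    Nat.card (AbacusBlobDiagram d n) = ∑ D : TLDiagram n, d ^ n * (d + 1) ^ exposedCount D := by
  rw [Nat.card_congr (equivSigma d n), Nat.card_sigma]
  refine sum_congr rfl fun D _ => ?_
  rw [Nat.card_prod, Nat.card_fun, Nat.card_fun, Finite.card_option, Nat.card_zmod, D.card_isArc,
    exposedCount]

end AbacusBlobDiagram

/-- the cardinality of the abacus blob monoid `𝔅l_{d,n}` is
`d^n ⬝ Σ_{k=1}^{n} χ_k^{(n)} (1+d)^k`. -/
theorem stmt16 (d n : ℕ) (hd : 1 ≤ d) (hn : 1 ≤ n) :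
    Nat.card (AbacusBlobDiagram d n) =
      d ^ n * ∑ k ∈ Finset.Icc 1 n, chi n k * (1 + d) ^ k := by
  have : NeZero d := ⟨by omega⟩
  rw [AbacusBlobDiagram.card_eq_sum, ← mul_sum, add_comm d 1, TLDiagram.sum_pow_exposedCount hn]
  simp only [Nat.cast_id]
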